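/- Let f : Finset(V) × X → ℝ be a reward function that is nonnegative, adaptive monotone, and ζ-weakly adaptive submodular for some constant ζ ≥ 1. Let π_g be a greedy policy and π* any policy, both run for k ≥ 1 steps. Then f_avg(π_g, k) ≥ (1 − e^{−1/ζ}) · f_avg(π*, k); i.e., the greedy policy selecting k actions obtains at least a (1 − e^{−1/ζ}) fraction of the value of any policy selecting k actions. -/

import Mathlib

attribute [local instance] Classical.propDecidable

noncomputable section

/-- A state `x` is consistent with partial realization `ψ` if every recorded
action–outcome pair agrees with the outcome model `μ`. -/
def Consistent {X V Y : Type*} (μ : V → X → Y) (x : X) (ψ : Finset (V × Y)) : Prop :=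
  ∀ e ∈ ψ, μ e.1 x = e.2

/-- The set of actions occurring in a partial realization. -/
def acts {V Y : Type*} (ψ : Finset (V × Y)) : Finset V := ψ.image Prod.fst

/-- `P[ψ]`: total prior probability of the states consistent with `ψ`. -/
def probP {X V Y : Type*} [Fintype X] (p : X → ℝ) (μ : V → X → Y)
    (ψ : Finset (V × Y)) : ℝ :=
  ∑ x ∈ Finset.univ.filter (fun x => Consistent μ x ψ), p x

/-- Conditional expected marginal benefit `Δ(v|ψ)` of action `v` given `ψ`. -/
def margBen {X V Y : Type*} [Fintype X] (p : X → ℝ) (μ : V → X → Y)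
    (f : Finset V → X → ℝ) (v : V) (ψ : Finset (V × Y)) : ℝ :=
  (probP p μ ψ)⁻¹ *
    ∑ x ∈ Finset.univ.filter (fun x => Consistent μ x ψ),
      p x * (f (insert v (acts ψ)) x - f (acts ψ) x)

/-- Adaptive monotonicity: every conditional expected marginal benefit is nonnegative. -/
def AdaptiveMonotone {X V Y : Type*} [Fintype X] (p : X → ℝ) (μ : V → X → Y)
    (f : Finset V → X → ℝ) : Prop :=
  ∀ (v : V) (ψ : Finset (V × Y)), 0 < probP p μ ψ → 0 ≤ margBen p μ f v ψ

/-- `ζ`-weak adaptive submodularity. -/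
def WeakAdaptiveSubmodular {X V Y : Type*} [Fintype X] (p : X → ℝ) (μ : V → X → Y)
    (f : Finset V → X → ℝ) (ζ : ℝ) : Prop :=
  ∀ ψ ψ' : Finset (V × Y), ψ ⊆ ψ' → 0 < probP p μ ψ' →
    ∀ v ∉ acts ψ', margBen p μ f v ψ' ≤ ζ * margBen p μ f v ψ

/-- History of action–outcome pairs generated by running policy `π` for `t`
steps under true state `x`. -/
def hist {X V Y : Type*} (μ : V → X → Y) (π : List (V × Y) → V) (x : X) :
    ℕ → List (V × Y)
  | 0 => []
  | t + 1 =>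
      hist μ π x t ++ [(π (hist μ π x t), μ (π (hist μ π x t)) x)]

/-- The set of actions appearing in a history. -/
def actsOf {V Y : Type*} (h : List (V × Y)) : Finset V := (h.map Prod.fst).toFinset

/-- Average reward `f_avg(π, t)` of policy `π` at horizon `t`. -/
def favg {X V Y : Type*} [Fintype X] (p : X → ℝ) (μ : V → X → Y)
    (f : Finset V → X → ℝ) (π : List (V × Y) → V) (t : ℕ) : ℝ :=
  ∑ x, p x * f (actsOf (hist μ π x t)) x

/-- A greedy policy: at every history reachable under some state of positive
prior probability, the chosen action maximizes the conditional expected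
marginal benefit. -/
def IsGreedy {X V Y : Type*} [Fintype X] (p : X → ℝ) (μ : V → X → Y)
    (f : Finset V → X → ℝ) (π : List (V × Y) → V) : Prop :=
  ∀ x : X, 0 < p x → ∀ t : ℕ, ∀ v : V,
    margBen p μ f v (hist μ π x t).toFinset ≤
      margBen p μ f (π (hist μ π x t)) (hist μ π x t).toFinset


/-! Run `π*` for `k` steps after `i` greedy steps. By adaptive monotonicity this earns at
least `f_avg(π*, k)`; by weak adaptive submodularity and greediness, each of its steps gains
at most `ζ` times the `(i+1)`-st greedy step. Hence with `g i = f_avg(π_g, i)`,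
`f_avg(π*, k) ≤ g i + ζ k (g (i+1) - g i)`: each greedy step closes a `1/(ζk)` fraction of
the gap to `f_avg(π*, k)`, and after `k` steps at most `(1 - 1/(ζk))^k ≤ e^{-1/ζ}` of it
remains. -/

open Finset

section Histories

variable {X V Y : Type*} (μ : V → X → Y)

lemma length_hist (π : List (V × Y) → V) (x : X) (t : ℕ) :
    (hist μ π x t).length = t := by
  induction t with
  | zero => rfl
  | succ t ih => simp [hist, ih]

lemma consistent_hist (π : List (V × Y) → V) (x : X) (t : ℕ) :
    Consistent μ x (hist μ π x t).toFinset := by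
  induction t with
  | zero => simp [Consistent, hist]
  | succ t ih =>
    intro e he
    simp only [hist, List.toFinset_append, mem_union, List.mem_toFinset,
      List.mem_singleton] at he
    rcases he with he | rfl
    · exact ih e (List.mem_toFinset.mpr he)
    · rfl

variable {μ}

lemma Consistent.mono {x : X} {ψ ψ' : Finset (V × Y)} (hψ : ψ ⊆ ψ')
    (h : Consistent μ x ψ') : Consistent μ x ψ :=
  fun e he => h e (hψ he)

lemma hist_eq_of_consistent {π : List (V × Y) → V} {x x' : X} {t : ℕ}
    (h : Consistent μ x' (hist μ π x t).toFinset) :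
    hist μ π x' t = hist μ π x t := by
  induction t with
  | zero => rfl
  | succ t ih =>
    have h' : Consistent μ x' ((hist μ π x t).toFinset ∪ {(π (hist μ π x t),
        μ (π (hist μ π x t)) x)}) := by
      simpa [hist] using h
    have hprev : hist μ π x' t = hist μ π x t :=
      ih (h'.mono subset_union_left)
    have hlast : μ (π (hist μ π x t)) x' = μ (π (hist μ π x t)) x :=
      h' _ (mem_union_right _ (mem_singleton_self _))
    simp only [hist, hprev, hlast]

lemma actsOf_append (l₁ l₂ : List (V × Y)) : actsOf (l₁ ++ l₂) = actsOf l₁ ∪ actsOf l₂ := by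
  simp [actsOf, List.toFinset_append]

lemma acts_toFinset (l : List (V × Y)) : acts l.toFinset = actsOf l := by
  ext
  simp [acts, actsOf]

lemma actsOf_hist_succ (π : List (V × Y) → V) (x : X) (t : ℕ) :
    actsOf (hist μ π x (t + 1)) = insert (π (hist μ π x t)) (actsOf (hist μ π x t)) := by
  rw [hist, actsOf_append, union_comm]
  rfl

end Histories

section Expectations

variable {X V Y : Type*} [Fintype X] {p : X → ℝ} {μ : V → X → Y} {f : Finset V → X → ℝ}

lemma probP_pos_of_consistent (hp : ∀ x, 0 ≤ p x) {ψ : Finset (V × Y)} {x : X}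
    (hx : Consistent μ x ψ) (hpx : 0 < p x) : 0 < probP p μ ψ :=
  hpx.trans_le <| single_le_sum (fun y _ => hp y) (mem_filter.mpr ⟨mem_univ x, hx⟩)

lemma probP_anti (hp : ∀ x, 0 ≤ p x) {ψ ψ' : Finset (V × Y)} (hψ : ψ ⊆ ψ') :
    probP p μ ψ' ≤ probP p μ ψ :=
  sum_le_sum_of_subset_of_nonneg (fun x hx => mem_filter.mpr
    ⟨mem_univ x, (mem_filter.mp hx).2.mono hψ⟩) fun x _ _ => hp x

lemma margBen_eq_zero_of_mem_acts {v : V} {ψ : Finset (V × Y)} (hv : v ∈ acts ψ) :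
    margBen p μ f v ψ = 0 := by
  simp [margBen, insert_eq_of_mem hv]

/-- The factor `P[ψ]⁻¹` in `margBen` is junk when `P[ψ] = 0`, but then every summand
vanishes as well. -/
lemma probP_mul_margBen (hp : ∀ x, 0 ≤ p x) (v : V) (ψ : Finset (V × Y)) :
    probP p μ ψ * margBen p μ f v ψ =
      ∑ x ∈ univ.filter (fun x => Consistent μ x ψ),
        p x * (f (insert v (acts ψ)) x - f (acts ψ) x) := by
  by_cases h : probP p μ ψ = 0
  · have hzero := (sum_eq_zero_iff_of_nonneg fun y _ => hp y).mp h
    rw [h, zero_mul]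
    exact (sum_eq_zero fun x hx => by rw [hzero x hx, zero_mul]).symm
  · rw [margBen, ← mul_assoc, mul_inv_cancel₀ h, one_mul]

/-- The states consistent with a reachable history `H` are exactly those producing `H`. -/
lemma sum_mul_hist_eq_sum_consistent (π : List (V × Y) → V) (t : ℕ)
    (F : List (V × Y) → X → ℝ) :
    ∑ x, p x * F (hist μ π x t) x =
      ∑ H ∈ univ.image (fun x => hist μ π x t),
        ∑ x ∈ univ.filter (fun x => Consistent μ x H.toFinset), p x * F H x := by
  rw [← sum_fiberwise_of_maps_to (g := fun x => hist μ π x t)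
    fun x _ => mem_image_of_mem _ (mem_univ x)]
  refine sum_congr rfl fun H hH => ?_
  obtain ⟨x₀, -, rfl⟩ := mem_image.mp hH
  have hfiber : univ.filter (fun x => hist μ π x t = hist μ π x₀ t) =
      univ.filter (fun x => Consistent μ x (hist μ π x₀ t).toFinset) := by
    ext x
    simp only [mem_filter, mem_univ, true_and]
    exact ⟨fun h => h ▸ consistent_hist μ π x t, hist_eq_of_consistent⟩
  rw [hfiber]
  exact sum_congr rfl fun x hx => by rw [hist_eq_of_consistent (mem_filter.mp hx).2]

lemma favg_succ_sub (hp : ∀ x, 0 ≤ p x) (π : List (V × Y) → V) (t : ℕ) :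
    favg p μ f π (t + 1) - favg p μ f π t =
      ∑ x, p x * margBen p μ f (π (hist μ π x t)) (hist μ π x t).toFinset := by
  calc favg p μ f π (t + 1) - favg p μ f π t
      = ∑ x, p x * (f (insert (π (hist μ π x t)) (acts (hist μ π x t).toFinset)) x
          - f (acts (hist μ π x t).toFinset) x) := by
        simp only [favg, ← sum_sub_distrib, ← mul_sub, acts_toFinset, actsOf_hist_succ]
    _ = ∑ H ∈ univ.image (fun x => hist μ π x t),
          probP p μ H.toFinset * margBen p μ f (π H) H.toFinset := by
        rw [sum_mul_hist_eq_sum_consistent π t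
          fun H x => f (insert (π H) (acts H.toFinset)) x - f (acts H.toFinset) x]
        exact sum_congr rfl fun H _ => (probP_mul_margBen hp _ _).symm
    _ = _ := by
        rw [sum_mul_hist_eq_sum_consistent π t fun H _ => margBen p μ f (π H) H.toFinset]
        exact sum_congr rfl fun H _ => by rw [probP, sum_mul]

lemma favg_nonneg (hp : ∀ x, 0 ≤ p x) (hf : ∀ A x, 0 ≤ f A x) (π : List (V × Y) → V)
    (t : ℕ) : 0 ≤ favg p μ f π t :=
  sum_nonneg fun x _ => mul_nonneg (hp x) (hf _ x)

lemma favg_monotone (hp : ∀ x, 0 ≤ p x) (hmono : AdaptiveMonotone p μ f)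
    (π : List (V × Y) → V) : Monotone (favg p μ f π) := by
  refine monotone_nat_of_le_succ fun t => sub_nonneg.mp ?_
  rw [favg_succ_sub hp]
  refine sum_nonneg fun x _ => ?_
  rcases (hp x).eq_or_lt with hx | hx
  · rw [← hx, zero_mul]
  · exact mul_nonneg hx.le (hmono _ _ (probP_pos_of_consistent hp (consistent_hist μ π x t) hx))

lemma margBen_le_mul_of_forall_le (hp : ∀ x, 0 ≤ p x) (hmono : AdaptiveMonotone p μ f)
    {ζ : ℝ} (hζ : 0 ≤ ζ) (hsub : WeakAdaptiveSubmodular p μ f ζ)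
    {ψ ψ' : Finset (V × Y)} (hψ : ψ ⊆ ψ') (hP : 0 < probP p μ ψ') {w : V}
    (hw : ∀ u, margBen p μ f u ψ ≤ margBen p μ f w ψ) (v : V) :
    margBen p μ f v ψ' ≤ ζ * margBen p μ f w ψ := by
  by_cases hv : v ∈ acts ψ'
  · rw [margBen_eq_zero_of_mem_acts hv]
    exact mul_nonneg hζ (hmono w ψ (hP.trans_le (probP_anti hp hψ)))
  · exact (hsub ψ ψ' hψ hP v hv).trans (mul_le_mul_of_nonneg_left (hw v) hζ)

end Expectations

section Concatenation

variable {X V Y : Type*} {μ : V → X → Y}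

def concatPolicy (i : ℕ) (π₁ π₂ : List (V × Y) → V) : List (V × Y) → V :=
  fun h => if h.length < i then π₁ h else π₂ (h.drop i)

lemma hist_concatPolicy_of_le (π₁ π₂ : List (V × Y) → V) (x : X) {i t : ℕ} (ht : t ≤ i) :
    hist μ (concatPolicy i π₁ π₂) x t = hist μ π₁ x t := by
  induction t with
  | zero => rfl
  | succ t ih =>
    have hlt : (hist μ π₁ x t).length < i := by rw [length_hist]; omega
    simp only [hist, ih (by omega), concatPolicy, hlt, if_true]

lemma hist_concatPolicy_add (π₁ π₂ : List (V × Y) → V) (x : X) (i j : ℕ) :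
    hist μ (concatPolicy i π₁ π₂) x (i + j) = hist μ π₁ x i ++ hist μ π₂ x j := by
  induction j with
  | zero => simpa [hist] using hist_concatPolicy_of_le π₁ π₂ x le_rfl
  | succ j ih =>
    have hlen : ¬(hist μ π₁ x i ++ hist μ π₂ x j).length < i := by simp [length_hist]
    rw [← add_assoc, hist, ih]
    simp only [concatPolicy, hlen, if_false, List.drop_left' (length_hist μ π₁ x i), hist,
      List.append_assoc]

variable [Fintype X] {p : X → ℝ} {f : Finset V → X → ℝ}

lemma favg_concatPolicy_self (π₁ π₂ : List (V × Y) → V) (i : ℕ) :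
    favg p μ f (concatPolicy i π₁ π₂) i = favg p μ f π₁ i := by
  simp only [favg, hist_concatPolicy_of_le π₁ π₂ _ le_rfl]

/-- The reward depends only on the set of actions, so running `π₁` then `π₂` ends where
running `π₂` then `π₁` does. -/
lemma favg_le_favg_concatPolicy (hp : ∀ x, 0 ≤ p x) (hmono : AdaptiveMonotone p μ f)
    (π₁ π₂ : List (V × Y) → V) (i k : ℕ) :
    favg p μ f π₂ k ≤ favg p μ f (concatPolicy i π₁ π₂) (i + k) := by
  calc favg p μ f π₂ k = favg p μ f (concatPolicy k π₂ π₁) k :=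
        (favg_concatPolicy_self π₂ π₁ k).symm
    _ ≤ favg p μ f (concatPolicy k π₂ π₁) (k + i) :=
        favg_monotone hp hmono _ (Nat.le_add_right k i)
    _ = favg p μ f (concatPolicy i π₁ π₂) (i + k) := by
        simp only [favg, hist_concatPolicy_add, actsOf_append, union_comm]

lemma favg_concatPolicy_succ_sub_le (hp : ∀ x, 0 ≤ p x) (hmono : AdaptiveMonotone p μ f)
    {ζ : ℝ} (hζ : 0 ≤ ζ) (hsub : WeakAdaptiveSubmodular p μ f ζ)
    {πg : List (V × Y) → V} (hg : IsGreedy p μ f πg) (π : List (V × Y) → V) (i j : ℕ) :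
    favg p μ f (concatPolicy i πg π) (i + j + 1) - favg p μ f (concatPolicy i πg π) (i + j)
      ≤ ζ * (favg p μ f πg (i + 1) - favg p μ f πg i) := by
  rw [favg_succ_sub hp, favg_succ_sub hp, mul_sum]
  refine sum_le_sum fun x _ => ?_
  rcases (hp x).eq_or_lt with hx | hx
  · simp [← hx]
  have hψ : (hist μ πg x i).toFinset ⊆ (hist μ (concatPolicy i πg π) x (i + j)).toFinset := by
    rw [hist_concatPolicy_add, List.toFinset_append]
    exact subset_union_left
  have hP := probP_pos_of_consistent hp (consistent_hist μ (concatPolicy i πg π) x (i + j)) hx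
  rw [mul_left_comm]
  exact mul_le_mul_of_nonneg_left
    (margBen_le_mul_of_forall_le hp hmono hζ hsub hψ hP (hg x hx i) _) hx.le

lemma favg_le_favg_add_mul_succ_sub (hp : ∀ x, 0 ≤ p x) (hmono : AdaptiveMonotone p μ f)
    {ζ : ℝ} (hζ : 0 ≤ ζ) (hsub : WeakAdaptiveSubmodular p μ f ζ)
    {πg : List (V × Y) → V} (hg : IsGreedy p μ f πg) (π : List (V × Y) → V) (i k : ℕ) :
    favg p μ f π k ≤
      favg p μ f πg i + ζ * k * (favg p μ f πg (i + 1) - favg p μ f πg i) := by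
  set σ := concatPolicy i πg π
  have htelescope : favg p μ f σ (i + k) - favg p μ f σ i ≤
      k * (ζ * (favg p μ f πg (i + 1) - favg p μ f πg i)) := by
    calc favg p μ f σ (i + k) - favg p μ f σ i
        = ∑ j ∈ range k, (favg p μ f σ (i + j + 1) - favg p μ f σ (i + j)) :=
          (sum_range_sub (fun j => favg p μ f σ (i + j)) k).symm
      _ ≤ ∑ _j ∈ range k, ζ * (favg p μ f πg (i + 1) - favg p μ f πg i) :=
          sum_le_sum fun j _ => favg_concatPolicy_succ_sub_le hp hmono hζ hsub hg π i j
      _ = _ := by rw [sum_const, card_range, nsmul_eq_mul]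
  have hstart : favg p μ f σ i = favg p μ f πg i := favg_concatPolicy_self πg π i
  linarith [favg_le_favg_concatPolicy hp hmono πg π i k]

end Concatenation

/-- Each step closes at least a `1/c` fraction of the gap `s - g i`. -/
lemma one_sub_exp_mul_le_of_le_add_mul_sub {g : ℕ → ℝ} {s c : ℝ} (hc : 1 ≤ c)
    (hs : 0 ≤ s) (hg : 0 ≤ g 0) (h : ∀ i, s ≤ g i + c * (g (i + 1) - g i)) (n : ℕ) :
    (1 - Real.exp (-(n / c))) * s ≤ g n := by
  have hc0 : 0 < c := one_pos.trans_le hc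
  have hr : 0 ≤ 1 - 1 / c := sub_nonneg.mpr ((div_le_one hc0).mpr hc)
  have hgap : ∀ n, s - g n ≤ (1 - 1 / c) ^ n * s := by
    intro n
    induction n with
    | zero => simpa using hg
    | succ n ih =>
      have hstep : s - g (n + 1) ≤ (1 - 1 / c) * (s - g n) := by
        have hclose : (s - g n) / c ≤ g (n + 1) - g n := by
          rw [div_le_iff₀ hc0]
          linarith [h n]
        have hexpand : (1 - 1 / c) * (s - g n) = s - g n - (s - g n) / c := by ring
        linarith
      calc s - g (n + 1) ≤ (1 - 1 / c) * (s - g n) := hstep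
        _ ≤ (1 - 1 / c) * ((1 - 1 / c) ^ n * s) := mul_le_mul_of_nonneg_left ih hr
        _ = (1 - 1 / c) ^ (n + 1) * s := by ring
  have hexp : (1 - 1 / c) ^ n ≤ Real.exp (-(n / c)) := by
    rw [show -((n : ℝ) / c) = n * -(1 / c) by ring, Real.exp_nat_mul]
    exact pow_le_pow_left₀ hr (by linarith [Real.add_one_le_exp (-(1 / c))]) n
  nlinarith [hgap n]

theorem greedy_near_optimal_same_horizon_general {X V Y : Type*}
    [Fintype X]
    (p : X → ℝ) (hp : ∀ x, 0 ≤ p x)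
    (μ : V → X → Y) (f : Finset V → X → ℝ)
    (hf : ∀ (A : Finset V) (x : X), 0 ≤ f A x)
    (hmono : AdaptiveMonotone p μ f)
    (ζ : ℝ) (hζ : 1 ≤ ζ)
    (hsub : WeakAdaptiveSubmodular p μ f ζ)
    (πg πs : List (V × Y) → V) (hg : IsGreedy p μ f πg)
    (k : ℕ) :
    (1 - Real.exp (-1 / ζ)) * favg p μ f πs k ≤ favg p μ f πg k := by
  have hζ0 : 0 ≤ ζ := zero_le_one.trans hζ
  have hrec := favg_le_favg_add_mul_succ_sub hp hmono hζ0 hsub hg πs (k := k)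
  have hs := favg_nonneg (μ := μ) hp hf πs k
  rcases Nat.eq_zero_or_pos k with rfl | hk
  · have hle : 1 - Real.exp (-1 / ζ) ≤ 1 := by linarith [Real.exp_pos (-1 / ζ)]
    simpa using (mul_le_of_le_one_left hs hle).trans (hrec 0)
  · have hζk : 1 ≤ ζ * k := one_le_mul_of_one_le_of_one_le hζ (by exact_mod_cast hk)
    have hexp : -((k : ℝ) / (ζ * k)) = -1 / ζ := by field_simp
    simpa [hexp] using one_sub_exp_mul_le_of_le_add_mul_sub hζk hs
      (favg_nonneg (μ := μ) hp hf πg 0) hrec k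

/-- the greedy policy selecting `k` actions obtains at least a
`(1 - e^{-1/ζ})` fraction of the value of any policy selecting `k` actions. -/
theorem greedy_near_optimal_same_horizon {X V Y : Type*}
    [Fintype X] [Nonempty X] [Fintype V] [Nonempty V] [Fintype Y] [Nonempty Y]
    (p : X → ℝ) (hp : ∀ x, 0 ≤ p x) (hpsum : ∑ x, p x = 1)
    (μ : V → X → Y) (f : Finset V → X → ℝ)
    (hf : ∀ (A : Finset V) (x : X), 0 ≤ f A x)
    (hmono : AdaptiveMonotone p μ f)
    (ζ : ℝ) (hζ : 1 ≤ ζ)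
    (hsub : WeakAdaptiveSubmodular p μ f ζ)
    (πg πs : List (V × Y) → V) (hg : IsGreedy p μ f πg)
    (k : ℕ) (hk : 1 ≤ k) :
    (1 - Real.exp (-1 / ζ)) * favg p μ f πs k ≤ favg p μ f πg k :=
  greedy_near_optimal_same_horizon_general p hp μ f hf hmono ζ hζ hsub πg πs hg k
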